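/- Let d ≥ 3 be an integer. There exist real numbers p₁ ≤ p₂ ≤ ⋯ ≤ p_d satisfying the vacuum Kasner conditions p₁ + ⋯ + p_d = 1 and p₁² + ⋯ + p_d² = 1 together with the strict inequality 1 + p₁ − p_d − p_{d−1} > 0 (equivalently, 2p₁ + p₂ + ⋯ + p_{d−2} > 0), if and only if d ≥ 10. (Pure vacuum gravity is subcritical, i.e. admits a Kasner-like velocity-dominated regime, exactly in spacetime dimension D = d + 1 ≥ 11.) -/
import Mathlib

lemma key_ineq (e a x y : ℝ) (he0 : 0 ≤ e) (he6 : e ≤ 6) (hax : a ≤ x) (hxy : x ≤ y)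
    (hy1 : y ≤ 1)
    (hmain : 1 - a^2 - x^2 - y^2 ≤ (a+x)*(1-a-x-y) - e*(a*x)) :
    1 + a - x - y ≤ 0 := by
  by_contra hg
  push_neg at hg
  have hF : (1-y)*(a+x-1-y) ≥ (e+2)*(a*x) := by nlinarith
  rcases le_or_gt 0 a with ha | ha
  · have hx0 : 0 ≤ x := ha.trans hax
    have h1 : (1-y)*(a+x-1-y) ≥ 0 :=
      le_trans (mul_nonneg (by linarith) (mul_nonneg ha hx0)) hF
    rcases eq_or_lt_of_le hy1 with h | h
    · nlinarith
    · nlinarith [mul_pos (show (0:ℝ) < 1 - y by linarith)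
        (show (0:ℝ) < 1 + y - a - x by nlinarith)]
  · rcases le_or_gt 0 x with hx | hx
    · have haxn : a * x ≤ 0 := mul_nonpos_of_nonpos_of_nonneg ha.le hx
      have h8 : (1-y)*(a+x-1-y) ≥ 8*(a*x) := by nlinarith [mul_nonneg (show (0:ℝ) ≤ 6 - e by linarith) (show (0:ℝ) ≤ -(a*x) by linarith)]
      nlinarith [mul_nonneg hg.le (show (0:ℝ) ≤ 1 + y - 2*x by linarith),
        sq_nonneg (3*x-1), mul_nonneg (mul_nonneg hg.le (show (0:ℝ) ≤ 1 + y - 2*x by linarith)) hx,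
        mul_nonneg (mul_nonneg hg.le (show (0:ℝ) ≤ 1 + y - 2*x by linarith)) (neg_nonneg.2 ha.le),
        mul_nonneg (sq_nonneg (3*x-1)) hx, mul_nonneg (sq_nonneg (3*x-1)) (neg_nonneg.2 ha.le)]
    · have hax0 : 0 < a * x := mul_pos_of_neg_of_neg (hax.trans_lt hx) hx
      nlinarith [mul_nonneg (show (0:ℝ) ≤ 1 - y by linarith)
        (show (0:ℝ) ≤ 1 + y - a - x by linarith)]

/-- Pure vacuum gravity is subcritical exactly in spacetime dimension
`D = d + 1 ≥ 11`: ordered vacuum Kasner exponents with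
`1 + p₁ − p_d − p_{d−1} > 0` exist iff `d ≥ 10`. -/
theorem vacuum_subcritical_iff (d : ℕ) (hd : 3 ≤ d) :
    (∃ p : Fin d → ℝ,
      Monotone p ∧
      (∑ i, p i) = 1 ∧
      (∑ i, (p i) ^ 2) = 1 ∧
      1 + p ⟨0, by omega⟩ - p ⟨d - 1, by omega⟩ - p ⟨d - 2, by omega⟩ > 0) ↔
    10 ≤ d := by
  constructor
  · rintro ⟨p, hmono, hsum, hsq, hpos⟩
    by_contra hlt
    push_neg at hlt
    set i0 : Fin d := ⟨0, by omega⟩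
    set i1 : Fin d := ⟨d - 2, by omega⟩
    set i2 : Fin d := ⟨d - 1, by omega⟩
    set a := p i0
    set x := p i1
    set y := p i2
    have h01 : i0 ≠ i1 := by simp [i0, i1, Fin.ext_iff]; omega
    have h02 : i0 ≠ i2 := by simp [i0, i2, Fin.ext_iff]; omega
    have h12 : i1 ≠ i2 := by simp [i1, i2, Fin.ext_iff]; omega
    set T : Finset (Fin d) := {i0, i1, i2}
    have hTcard : T.card = 3 := by
      rw [Finset.card_insert_of_notMem (by simp [h01, h02]),
        Finset.card_insert_of_notMem (by simp [h12]), Finset.card_singleton]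
    set S : Finset (Fin d) := Finset.univ \ T
    have hScard : S.card = d - 3 := by
      rw [Finset.card_sdiff_of_subset (Finset.subset_univ T), Finset.card_univ, Fintype.card_fin, hTcard]
    have hsumT : ∑ i ∈ T, p i = a + x + y := by
      rw [Finset.sum_insert (by simp [h01, h02]), Finset.sum_insert (by simp [h12]),
        Finset.sum_singleton]
      ring
    have hsqT : ∑ i ∈ T, (p i)^2 = a^2 + x^2 + y^2 := by
      rw [Finset.sum_insert (by simp [h01, h02]), Finset.sum_insert (by simp [h12]),
        Finset.sum_singleton]
      ring
    have hsumS : ∑ i ∈ S, p i = 1 - a - x - y := by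
      rw [Finset.sum_sdiff_eq_sub (Finset.subset_univ T), hsum, hsumT]; ring
    have hsqS : ∑ i ∈ S, (p i)^2 = 1 - a^2 - x^2 - y^2 := by
      rw [Finset.sum_sdiff_eq_sub (Finset.subset_univ T), hsq, hsqT]; ring
    have hbounds : ∀ i ∈ S, a ≤ p i ∧ p i ≤ x := by
      intro i hi
      simp only [S, T, Finset.mem_sdiff, Finset.mem_univ, Finset.mem_insert,
        Finset.mem_singleton, true_and] at hi
      push_neg at hi
      constructor
      · exact hmono (show i0 ≤ i from by simp [i0, Fin.le_def])
      · refine hmono (show i ≤ i1 from ?_)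
        simp only [i1, Fin.le_def]
        have h1 : (i : ℕ) ≠ d - 2 := fun h => hi.2.1 (Fin.ext h)
        have h2 : (i : ℕ) ≠ d - 1 := fun h => hi.2.2 (Fin.ext h)
        have := i.isLt
        omega
    have hkey : ∑ i ∈ S, (p i)^2 ≤ (a+x) * (∑ i ∈ S, p i) - (S.card : ℝ) * (a*x) := by
      calc ∑ i ∈ S, (p i)^2 ≤ ∑ i ∈ S, ((a+x) * p i - a*x) := by
            refine Finset.sum_le_sum fun i hi => ?_
            obtain ⟨h1, h2⟩ := hbounds i hi
            nlinarith [mul_nonneg (sub_nonneg.2 h1) (sub_nonneg.2 h2)]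
        _ = (a+x) * (∑ i ∈ S, p i) - (S.card : ℝ) * (a*x) := by
            rw [Finset.sum_sub_distrib, ← Finset.mul_sum, Finset.sum_const, nsmul_eq_mul]
    have hy1 : y ≤ 1 := by
      have h0 : (0:ℝ) ≤ ∑ i ∈ S, (p i)^2 := Finset.sum_nonneg fun i _ => sq_nonneg _
      nlinarith [sq_nonneg a, sq_nonneg x, sq_nonneg (y-1)]
    have hax : a ≤ x := hmono (show i0 ≤ i1 from by simp [i0, i1, Fin.le_def])
    have hxy : x ≤ y := hmono (show i1 ≤ i2 from by simp [i1, i2, Fin.le_def]; omega)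
    have he6 : ((d - 3 : ℕ) : ℝ) ≤ 6 := by
      have : d - 3 ≤ 6 := by omega
      exact_mod_cast this
    have := key_ineq ((d - 3 : ℕ) : ℝ) a x y (by positivity) he6 hax hxy hy1
      (by rw [← hsqS, ← hsumS]; simpa [hScard] using hkey)
    linarith
  · intro hd10
    refine ⟨fun i => if (i : ℕ) < 3 then -8/29 else if (i : ℕ) = 3 then -7/29
      else if (i : ℕ) < d - 6 then 0 else 10/29, ?_, ?_, ?_, ?_⟩
    · intro i j hij
      have hij' : (i : ℕ) ≤ j := hij
      have hi := i.isLt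
      have hj := j.isLt
      dsimp only
      split_ifs <;> (try omega) <;> norm_num
    · rw [Fin.sum_univ_eq_sum_range (fun n => if n < 3 then (-8/29 : ℝ) else if n = 3 then -7/29
        else if n < d - 6 then 0 else 10/29)]
      rw [Finset.range_eq_Ico, ← Finset.sum_Ico_consecutive _ (by omega : 0 ≤ 4) (by omega : 4 ≤ d),
        ← Finset.sum_Ico_consecutive _ (by omega : 4 ≤ d - 6) (by omega : d - 6 ≤ d)]
      have h1 : ∑ n ∈ Finset.Ico 0 4, (if n < 3 then (-8/29 : ℝ) else if n = 3 then -7/29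
          else if n < d - 6 then 0 else 10/29) = -31/29 := by
        rw [show Finset.Ico 0 4 = Finset.range 4 from by rw [Finset.range_eq_Ico]]
        simp [Finset.sum_range_succ]
        norm_num
      have h2 : ∑ n ∈ Finset.Ico 4 (d - 6), (if n < 3 then (-8/29 : ℝ) else if n = 3 then -7/29
          else if n < d - 6 then 0 else 10/29) = 0 := by
        refine Finset.sum_eq_zero fun n hn => ?_
        rw [Finset.mem_Ico] at hn
        rw [if_neg (by omega), if_neg (by omega), if_pos (by omega)]
      have h3 : ∑ n ∈ Finset.Ico (d - 6) d, (if n < 3 then (-8/29 : ℝ) else if n = 3 then -7/29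
          else if n < d - 6 then 0 else 10/29) = 60/29 := by
        have hval : ∀ n ∈ Finset.Ico (d - 6) d, (if n < 3 then (-8/29 : ℝ) else if n = 3 then -7/29
            else if n < d - 6 then 0 else 10/29) = 10/29 := by
          intro n hn
          rw [Finset.mem_Ico] at hn
          rw [if_neg (by omega), if_neg (by omega), if_neg (by omega)]
        rw [Finset.sum_congr rfl hval, Finset.sum_const, Nat.card_Ico,
          show d - (d - 6) = 6 from by omega, nsmul_eq_mul]
        norm_num
      rw [h1, h2, h3]; norm_num
    · rw [Fin.sum_univ_eq_sum_range (fun n => (if n < 3 then (-8/29 : ℝ) else if n = 3 then -7/29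
        else if n < d - 6 then 0 else 10/29)^2)]
      rw [Finset.range_eq_Ico, ← Finset.sum_Ico_consecutive _ (by omega : 0 ≤ 4) (by omega : 4 ≤ d),
        ← Finset.sum_Ico_consecutive _ (by omega : 4 ≤ d - 6) (by omega : d - 6 ≤ d)]
      have h1 : ∑ n ∈ Finset.Ico 0 4, (if n < 3 then (-8/29 : ℝ) else if n = 3 then -7/29
          else if n < d - 6 then 0 else 10/29)^2 = 241/841 := by
        rw [show Finset.Ico 0 4 = Finset.range 4 from by rw [Finset.range_eq_Ico]]
        simp [Finset.sum_range_succ]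
        norm_num
      have h2 : ∑ n ∈ Finset.Ico 4 (d - 6), (if n < 3 then (-8/29 : ℝ) else if n = 3 then -7/29
          else if n < d - 6 then 0 else 10/29)^2 = 0 := by
        refine Finset.sum_eq_zero fun n hn => ?_
        rw [Finset.mem_Ico] at hn
        rw [if_neg (by omega), if_neg (by omega), if_pos (by omega)]
        norm_num
      have h3 : ∑ n ∈ Finset.Ico (d - 6) d, (if n < 3 then (-8/29 : ℝ) else if n = 3 then -7/29
          else if n < d - 6 then 0 else 10/29)^2 = 600/841 := by
        have hval : ∀ n ∈ Finset.Ico (d - 6) d, (if n < 3 then (-8/29 : ℝ) else if n = 3 then -7/29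
            else if n < d - 6 then 0 else 10/29)^2 = 100/841 := by
          intro n hn
          rw [Finset.mem_Ico] at hn
          rw [if_neg (by omega), if_neg (by omega), if_neg (by omega)]
          norm_num
        rw [Finset.sum_congr rfl hval, Finset.sum_const, Nat.card_Ico,
          show d - (d - 6) = 6 from by omega, nsmul_eq_mul]
        norm_num
      rw [h1, h2, h3]; norm_num
    · dsimp only
      rw [if_pos (by omega), if_neg (by omega : ¬ d - 1 < 3), if_neg (by omega : ¬ d - 1 = 3),
        if_neg (by omega : ¬ d - 1 < d - 6), if_neg (by omega : ¬ d - 2 < 3),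
        if_neg (by omega : ¬ d - 2 = 3), if_neg (by omega : ¬ d - 2 < d - 6)]
      norm_num
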